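/- Let α be a complex number with Im α > 0 and let z_1, ..., z_n be non-real complex numbers satisfying Σ_{j=1}^n Arg_{[0,π)} z_j = Arg α. Then for the monic polynomial h(z) = ∏_{j=1}^n (z - z_j) there exists a unique pair of monic real polynomials p and q, with deg p = n and deg q = n - 1 and with strictly interlacing zeros, such that h(z) = α p(z) + (1 - α) z q(z). -/

import Mathlib

/-!
Over `ℝ`, the numbers `α` and `1 - α` form a basis of `ℂ`, so coefficientwise
`h = α P + (1 - α) S` for unique real polynomials `P` and `S`, both monic of degree `n`. Since
`exp (i Arg_{[0,π)} w)` is a real multiple of `w`, the hypothesis on the arguments says that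
`h 0 = (-1)ⁿ ∏ zⱼ` is a real multiple of `α`, i.e. `S 0 = 0`, so `S = X q`.

For real `x`, `h x` is a real multiple of `exp (i φ x)` with a factor of constant sign, where
`φ x = ∑ⱼ Arg_{[0,π)} (x - zⱼ)` is continuous, equals `Arg α` at `0`, and tends to `mπ` at `-∞`
and to `(n - m)π` at `+∞`, `m` being the number of `zⱼ` below the real axis. Where
`φ x = Arg (α - 1) + kπ`, `h x` is a real multiple of `1 - α`: there `P x = 0` and `S x` has
sign `±(-1)ᵏ`. The intermediate value theorem gives `m` such points on the negative and `n - m`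
on the positive half-line. As `deg P = n` they are all the roots of `P`, so each level is crossed
only once on each side, which forces the levels to be monotone along each half-line. Hence `q`
changes sign between consecutive roots of `P`.
-/

/-- `Arg_{[0,π)} z`: equals `Arg z` if `Im z > 0`, `0` if `z` is real, and
`π + Arg z` if `Im z < 0`. -/
noncomputable def arg0pi (z : ℂ) : ℝ :=
  if 0 < z.im then Complex.arg z
  else if z.im < 0 then Real.pi + Complex.arg z
  else 0

/-- The zeros of the real polynomials `p` (of degree `n`) and `q` (of degree `n - 1`)
strictly interlace. -/
def StrictInterlace (n : ℕ) (p q : Polynomial ℝ) : Prop :=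
  ∃ (lam : Fin n → ℝ) (mu : Fin (n - 1) → ℝ),
    StrictMono lam ∧ StrictMono mu ∧
    p = ∏ i, (Polynomial.X - Polynomial.C (lam i)) ∧
    q = ∏ i, (Polynomial.X - Polynomial.C (mu i)) ∧
    ∀ i : Fin (n - 1),
      lam ⟨i.1, by have h := i.2; omega⟩ < mu i ∧
        mu i < lam ⟨i.1 + 1, by have h := i.2; omega⟩

open Polynomial Filter Topology ComplexConjugate
open scoped Real

lemma Polynomial.eq_prod_X_sub_C_of_injective {K : Type*} [Field K] {p : K[X]} (hp : p.Monic)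
    {n : ℕ} (hdeg : p.natDegree = n) {f : Fin n → K} (hf : Function.Injective f)
    (hroot : ∀ i, p.IsRoot (f i)) : p = ∏ i, (X - C (f i)) := by
  refine eq_of_monic_of_dvd_of_natDegree_le (monic_prod_of_monic _ _ fun i _ => monic_X_sub_C _)
    hp ?_ (by rw [hdeg, natDegree_prod_of_monic _ _ fun i _ => monic_X_sub_C _]; simp)
  exact Finset.prod_dvd_of_coprime (fun i _ j _ hij => pairwise_coprime_X_sub_C hf hij)
    fun i _ => dvd_iff_isRoot.2 (hroot i)

lemma Polynomial.Monic.eq_X_mul_divX_of_coeff_zero {R : Type*} [CommRing R] [Nontrivial R]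
    {S : R[X]} (hS : S.Monic) (h0 : S.coeff 0 = 0) :
    S = X * S.divX ∧ S.divX.Monic ∧ S.divX.natDegree = S.natDegree - 1 := by
  have hSX : S = X * S.divX := by simpa [h0] using (X_mul_divX_add S).symm
  exact ⟨hSX, monic_X.of_mul_monic_left (hSX ▸ hS), natDegree_divX_eq_natDegree_tsub_one⟩

noncomputable def imPoly (P : ℂ[X]) : ℝ[X] :=
  ⟨⟨P.toFinsupp.coeff.mapRange Complex.im Complex.zero_im⟩⟩

@[simp] lemma coeff_imPoly (P : ℂ[X]) (k : ℕ) : (imPoly P).coeff k = (P.coeff k).im := rfl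

lemma natDegree_imPoly_le (P : ℂ[X]) : (imPoly P).natDegree ≤ P.natDegree :=
  natDegree_le_iff_coeff_eq_zero.2 fun _ hm => by simp [coeff_eq_zero_of_natDegree_lt hm]

open Complex in
lemma eval_imPoly (P : ℂ[X]) (x : ℝ) : (imPoly P).eval x = (P.eval (x : ℂ)).im := by
  rw [eval_eq_sum_range' (Nat.lt_succ_of_le (natDegree_imPoly_le P)),
    eval_eq_sum_range' (Nat.lt_succ_self P.natDegree), im_sum]
  refine Finset.sum_congr rfl fun k _ => ?_
  simp [mul_im, ← ofReal_pow]

lemma monic_imPoly_C_mul {H : ℂ[X]} (hH : H.Monic) {c : ℂ} (hc : c.im = 1) :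
    (imPoly (C c * H)).Monic ∧ (imPoly (C c * H)).natDegree = H.natDegree := by
  have htop : (imPoly (C c * H)).coeff H.natDegree = 1 := by
    simp [coeff_C_mul, hH.coeff_natDegree, hc]
  have hdeg : (imPoly (C c * H)).natDegree = H.natDegree :=
    le_antisymm ((natDegree_imPoly_le _).trans (natDegree_C_mul_le c H))
      (le_natDegree_of_ne_zero (by rw [htop]; exact one_ne_zero))
  exact ⟨by rw [Monic, leadingCoeff, hdeg, htop], hdeg⟩

section Coordinates

open Complex

variable (α : ℂ)

/-- Coordinates of `c` in the real basis `α, 1 - α` of `ℂ`, by Cramer's rule. -/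
noncomputable def coordFst (c : ℂ) : ℝ := ((1 - conj α) * c).im / α.im

noncomputable def coordSnd (c : ℂ) : ℝ := -(conj α * c).im / α.im

noncomputable def partFst (H : ℂ[X]) : ℝ[X] := imPoly (C ((1 - conj α) / α.im) * H)

noncomputable def partSnd (H : ℂ[X]) : ℝ[X] := imPoly (C (-conj α / α.im) * H)

variable {α}

lemma coordFst_add (hα : α.im ≠ 0) (a s : ℝ) : coordFst α (α * a + (1 - α) * s) = a := by
  rw [coordFst, div_eq_iff hα]
  simp only [mul_im, mul_re, add_re, add_im, sub_re, sub_im, one_re, one_im, conj_re, conj_im,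
    ofReal_re, ofReal_im]
  ring

lemma coordSnd_add (hα : α.im ≠ 0) (a s : ℝ) : coordSnd α (α * a + (1 - α) * s) = s := by
  rw [coordSnd, div_eq_iff hα]
  simp only [mul_im, mul_re, add_re, add_im, sub_re, sub_im, one_re, one_im, conj_re, conj_im,
    ofReal_re, ofReal_im]
  ring

lemma add_coordFst_coordSnd (hα : α.im ≠ 0) (c : ℂ) :
    α * coordFst α c + (1 - α) * coordSnd α c = c := by
  apply Complex.ext <;>
    simp only [coordFst, coordSnd, mul_im, mul_re, add_re, add_im, sub_re, sub_im, one_re, one_im,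
      conj_re, conj_im, ofReal_re, ofReal_im] <;>
    field_simp <;> ring

lemma coeff_partFst (H : ℂ[X]) (k : ℕ) : (partFst α H).coeff k = coordFst α (H.coeff k) := by
  simp [partFst, coordFst, coeff_C_mul, div_mul_eq_mul_div, div_ofReal_im]

lemma coeff_partSnd (H : ℂ[X]) (k : ℕ) : (partSnd α H).coeff k = coordSnd α (H.coeff k) := by
  simp [partSnd, coordSnd, coeff_C_mul, div_mul_eq_mul_div, div_ofReal_im]

lemma eval_partFst (H : ℂ[X]) (x : ℝ) : (partFst α H).eval x = coordFst α (H.eval (x : ℂ)) := by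
  rw [partFst, eval_imPoly, eval_mul, eval_C, coordFst, div_mul_eq_mul_div, div_ofReal_im]

lemma eval_partSnd (H : ℂ[X]) (x : ℝ) : (partSnd α H).eval x = coordSnd α (H.eval (x : ℂ)) := by
  rw [partSnd, eval_imPoly, eval_mul, eval_C, coordSnd, div_mul_eq_mul_div, div_ofReal_im,
    neg_mul, neg_im]

lemma eq_C_mul_partFst_add_C_mul_partSnd (hα : α.im ≠ 0) (H : ℂ[X]) :
    H = C α * (partFst α H).map (algebraMap ℝ ℂ)
      + C (1 - α) * (partSnd α H).map (algebraMap ℝ ℂ) := by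
  ext k
  simp only [coeff_add, coeff_C_mul, coeff_map, coeff_partFst, coeff_partSnd, coe_algebraMap,
    add_coordFst_coordSnd hα]

lemma partFst_eq_and_partSnd_eq (hα : α.im ≠ 0) {A B : ℝ[X]} :
    partFst α (C α * A.map (algebraMap ℝ ℂ) + C (1 - α) * B.map (algebraMap ℝ ℂ)) = A ∧
      partSnd α (C α * A.map (algebraMap ℝ ℂ) + C (1 - α) * B.map (algebraMap ℝ ℂ)) = B := by
  constructor <;> ext k <;>
    simp only [coeff_partFst, coeff_partSnd, coeff_add, coeff_C_mul, coeff_map, coe_algebraMap,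
      coordFst_add hα, coordSnd_add hα]

lemma monic_partFst (hα : α.im ≠ 0) {H : ℂ[X]} (hH : H.Monic) :
    (partFst α H).Monic ∧ (partFst α H).natDegree = H.natDegree :=
  monic_imPoly_C_mul hH (by simp [div_ofReal_im, hα])

lemma monic_partSnd (hα : α.im ≠ 0) {H : ℂ[X]} (hH : H.Monic) :
    (partSnd α H).Monic ∧ (partSnd α H).natDegree = H.natDegree :=
  monic_imPoly_C_mul hH (by simp [div_ofReal_im, hα])

end Coordinates

section Arg0pi

open Complex

lemma arg_eq_pi_div_two_sub_arctan {z : ℂ} (hz : 0 < z.im) :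
    arg z = π / 2 - Real.arctan (z.re / z.im) := by
  have hz0 : z ≠ 0 := fun h => by simp [h] at hz
  have harg : 0 < arg z :=
    (arg_nonneg_iff.2 hz.le).lt_of_ne fun h => hz.ne' (arg_eq_zero_iff.1 h.symm).2
  have hlt : arg z < π := arg_lt_pi_iff.2 (Or.inr hz.ne')
  have htan : Real.tan (π / 2 - arg z) = z.re / z.im := by
    rw [Real.tan_pi_div_two_sub, Real.tan_eq_sin_div_cos, inv_div, sin_arg, cos_arg hz0]
    field_simp
  rw [← htan, Real.arctan_tan (by linarith) (by linarith)]
  ring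

lemma arg0pi_of_im_neg {z : ℂ} (hz : z.im < 0) : arg0pi z = arg (-z) := by
  rw [arg0pi, if_neg hz.not_gt, if_pos hz, arg_neg_eq_arg_add_pi_of_im_neg hz, add_comm]

lemma arg0pi_eq_pi_div_two_sub_arctan {z : ℂ} (hz : z.im ≠ 0) :
    arg0pi z = π / 2 - Real.arctan (z.re / z.im) := by
  rcases hz.lt_or_gt with hneg | hpos
  · rw [arg0pi_of_im_neg hneg, arg_eq_pi_div_two_sub_arctan (by simpa using hneg)]
    simp [neg_div_neg_eq]
  · rw [arg0pi, if_pos hpos, arg_eq_pi_div_two_sub_arctan hpos]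

lemma arg0pi_neg {z : ℂ} (hz : z.im ≠ 0) : arg0pi (-z) = arg0pi z := by
  rw [arg0pi_eq_pi_div_two_sub_arctan hz, arg0pi_eq_pi_div_two_sub_arctan (by simpa using hz)]
  simp [neg_div_neg_eq]

lemma mul_sign_im_eq_norm_mul_exp_arg0pi {z : ℂ} (hz : z.im ≠ 0) :
    z * (Real.sign z.im : ℂ) = ‖z‖ * exp (arg0pi z * I) := by
  rcases hz.lt_or_gt with hneg | hpos
  · rw [Real.sign_of_neg hneg, arg0pi_of_im_neg hneg, ← norm_neg, norm_mul_exp_arg_mul_I]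
    push_cast
    ring
  · rw [Real.sign_of_pos hpos, arg0pi, if_pos hpos, norm_mul_exp_arg_mul_I]
    push_cast
    ring

lemma arg_lt_arg_sub_one {α : ℂ} (hα : 0 < α.im) : arg α < arg (α - 1) := by
  rw [arg_eq_pi_div_two_sub_arctan hα, arg_eq_pi_div_two_sub_arctan (by simpa using hα)]
  have : (α - 1).re / (α - 1).im < α.re / α.im := by
    simp only [sub_re, one_re, sub_im, one_im, sub_zero]
    exact div_lt_div_of_pos_right (by linarith) hα
  linarith [Real.arctan_strictMono this]

lemma arg0pi_ofReal_sub {w : ℂ} (hw : w.im ≠ 0) (x : ℝ) :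
    arg0pi (x - w) = π / 2 + Real.arctan ((x - w.re) / w.im) := by
  rw [arg0pi_eq_pi_div_two_sub_arctan (by simpa using hw)]
  simp [div_neg, Real.arctan_neg, sub_eq_add_neg]

lemma continuous_arg0pi_ofReal_sub {w : ℂ} (hw : w.im ≠ 0) :
    Continuous fun x : ℝ => arg0pi (x - w) := by
  simp only [arg0pi_ofReal_sub hw]
  fun_prop

lemma tendsto_arg0pi_ofReal_sub_atTop {w : ℂ} (hw : w.im ≠ 0) :
    Tendsto (fun x : ℝ => arg0pi (x - w)) atTop (𝓝 (if 0 < w.im then π else 0)) := by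
  simp only [arg0pi_ofReal_sub hw]
  have hlin := tendsto_atTop_add_const_right atTop (-w.re) tendsto_id
  simp only [id, ← sub_eq_add_neg] at hlin
  rcases hw.lt_or_gt with hneg | hpos
  · have := (Real.tendsto_arctan_atBot.mono_right nhdsWithin_le_nhds).comp
      (hlin.atTop_div_const_of_neg hneg)
    simpa [if_neg hneg.not_gt] using this.const_add (π / 2)
  · have := (Real.tendsto_arctan_atTop.mono_right nhdsWithin_le_nhds).comp
      (hlin.atTop_div_const hpos)
    simpa [if_pos hpos] using this.const_add (π / 2)

end Arg0pi

section Phase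

open Complex

variable {n : ℕ}

/-- Each `x - zⱼ` stays in one open half-plane, where `arg0pi` is continuous, so this is a
continuous argument of `∏ⱼ (x - zⱼ)` up to the sign `imSign z`. -/
noncomputable def phase (z : Fin n → ℂ) (x : ℝ) : ℝ := ∑ j, arg0pi (x - z j)

noncomputable def imSign (z : Fin n → ℂ) : ℝ := ∏ j, Real.sign (-(z j).im)

variable {z : Fin n → ℂ}

lemma imSign_ne_zero (hz : ∀ j, (z j).im ≠ 0) : imSign z ≠ 0 :=
  Finset.prod_ne_zero_iff.2 fun j _ => by
    rcases (hz j).lt_or_gt with h | h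
    · rw [Real.sign_of_pos (neg_pos.2 h)]; norm_num
    · rw [Real.sign_of_neg (neg_neg_iff_pos.2 h)]; norm_num

lemma continuous_phase (hz : ∀ j, (z j).im ≠ 0) : Continuous (phase z) :=
  continuous_finsetSum _ fun j _ => continuous_arg0pi_ofReal_sub (hz j)

lemma phase_zero (hz : ∀ j, (z j).im ≠ 0) : phase z 0 = ∑ j, arg0pi (z j) := by
  simp [phase, arg0pi_neg (hz _)]

lemma phase_neg (hz : ∀ j, (z j).im ≠ 0) (x : ℝ) : phase z (-x) = phase (-z) x := by
  refine Finset.sum_congr rfl fun j _ => ?_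
  rw [← arg0pi_neg (by simpa using hz j)]
  simp [add_comm]

lemma tendsto_phase_atTop (hz : ∀ j, (z j).im ≠ 0) :
    Tendsto (phase z) atTop (𝓝 ((Finset.univ.filter fun j => 0 < (z j).im).card * π)) := by
  have := tendsto_finsetSum Finset.univ fun j _ => tendsto_arg0pi_ofReal_sub_atTop (hz j)
  rw [Finset.sum_ite, Finset.sum_const_zero, add_zero, Finset.sum_const, nsmul_eq_mul] at this
  exact this

lemma tendsto_phase_atBot (hz : ∀ j, (z j).im ≠ 0) :
    Tendsto (phase z) atBot (𝓝 ((Finset.univ.filter fun j => (z j).im < 0).card * π)) := by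
  have hz' : ∀ j, ((-z) j).im ≠ 0 := fun j => by simpa using hz j
  have := (tendsto_phase_atTop hz').comp tendsto_neg_atBot_atTop
  have hfun : phase (-z) ∘ Neg.neg = phase z := funext fun x => by
    simpa using phase_neg hz' x
  simpa [hfun] using this

lemma eval_prod_mul_imSign (hz : ∀ j, (z j).im ≠ 0) (x : ℝ) :
    (∏ j, (X - C (z j))).eval (x : ℂ) * imSign z
      = ((∏ j, ‖(x : ℂ) - z j‖ : ℝ) : ℂ) * exp (phase z x * I) := by
  have hfactor : ∀ j, ((x : ℂ) - z j) * (Real.sign (-(z j).im) : ℂ)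
      = ‖(x : ℂ) - z j‖ * exp (arg0pi (x - z j) * I) := fun j => by
    simpa using mul_sign_im_eq_norm_mul_exp_arg0pi (z := x - z j) (by simpa using hz j)
  simp only [eval_prod, eval_sub, eval_X, eval_C, imSign, phase, ofReal_prod, ofReal_sum,
    Finset.sum_mul, exp_sum, ← Finset.prod_mul_distrib, hfactor]

end Phase

section PhaseLevels

open Complex

lemma eq_mul_ofReal_of_mul_eq_exp_arg {c v : ℂ} {E r : ℝ} (hE : E ≠ 0) (hv : v ≠ 0)
    (h : c * E = r * exp (arg v * I)) : c = v * ((r / (‖v‖ * E) : ℝ) : ℂ) := by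
  have hnorm : (‖v‖ : ℂ) ≠ 0 := ofReal_ne_zero.2 (norm_ne_zero_iff.2 hv)
  have hexp : exp (arg v * I) = v / ‖v‖ := by
    rw [eq_div_iff hnorm, mul_comm, norm_mul_exp_arg_mul_I]
  have hE' : (E : ℂ) ≠ 0 := ofReal_ne_zero.2 hE
  calc c = c * E / E := by field_simp
    _ = _ := by rw [h, hexp]; push_cast; field_simp

variable {n : ℕ} {α : ℂ} {z : Fin n → ℂ}

lemma coordSnd_eval_zero (hα : 0 < α.im) (hz : ∀ j, (z j).im ≠ 0)
    (hsum : ∑ j, arg0pi (z j) = arg α) : coordSnd α ((∏ j, (X - C (z j))).eval 0) = 0 := by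
  have h := eval_prod_mul_imSign hz 0
  rw [phase_zero hz, hsum, ofReal_zero] at h
  obtain ⟨a, ha⟩ : ∃ a : ℝ, (∏ j, (X - C (z j))).eval 0 = α * a :=
    ⟨_, eq_mul_ofReal_of_mul_eq_exp_arg (imSign_ne_zero hz) (fun h0 => by simp [h0] at hα) h⟩
  simpa [ha] using coordSnd_add hα.ne' a 0

lemma eval_prod_of_phase_eq (hα : 0 < α.im) (hz : ∀ j, (z j).im ≠ 0) {x : ℝ} {k : ℕ}
    (hx : phase z x = arg (α - 1) + k * π) :
    (∏ j, (X - C (z j))).eval (x : ℂ)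
      = (1 - α) * ((-((∏ j, ‖(x : ℂ) - z j‖) * (-1) ^ k / (‖α - 1‖ * imSign z)) : ℝ) : ℂ) := by
  have hexp : exp (phase z x * I) = (-1) ^ k * exp (arg (α - 1) * I) := by
    rw [hx]
    push_cast
    rw [add_mul, exp_add, mul_assoc, exp_nat_mul, exp_pi_mul_I]
    ring
  have h : (∏ j, (X - C (z j))).eval (x : ℂ) * imSign z
      = (((∏ j, ‖(x : ℂ) - z j‖) * (-1) ^ k : ℝ) : ℂ) * exp (arg (α - 1) * I) := by
    rw [eval_prod_mul_imSign hz, hexp]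
    push_cast
    ring
  rw [eq_mul_ofReal_of_mul_eq_exp_arg (imSign_ne_zero hz)
    (fun h0 => by simp [sub_eq_zero.1 h0] at hα) h]
  push_cast
  ring

lemma eval_parts_of_phase_eq (hα : 0 < α.im) (hz : ∀ j, (z j).im ≠ 0) {x : ℝ} {k : ℕ}
    (hx : phase z x = arg (α - 1) + k * π) :
    (partFst α (∏ j, (X - C (z j)))).eval x = 0 ∧
      (-1) ^ k * (partSnd α (∏ j, (X - C (z j)))).eval x * imSign z < 0 := by
  set N := ∏ j, ‖(x : ℂ) - z j‖
  have hN : 0 < N := Finset.prod_pos fun j _ =>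
    norm_pos_iff.2 fun h0 => hz j (by simpa using congrArg Complex.im h0)
  have hα1 : 0 < ‖α - 1‖ := norm_pos_iff.2 fun h0 => by simp [sub_eq_zero.1 h0] at hα
  have hE := imSign_ne_zero hz
  have hk : (-1 : ℝ) ^ k * (-1) ^ k = 1 := by rw [← mul_pow]; norm_num
  have hfst := coordFst_add hα.ne' 0 (-(N * (-1) ^ k / (‖α - 1‖ * imSign z)))
  have hsnd := coordSnd_add hα.ne' 0 (-(N * (-1) ^ k / (‖α - 1‖ * imSign z)))
  rw [ofReal_zero, mul_zero, zero_add] at hfst hsnd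
  rw [eval_partFst, eval_partSnd, eval_prod_of_phase_eq hα hz hx]
  refine ⟨hfst, ?_⟩
  rw [hsnd, show (-1) ^ k * -(N * (-1) ^ k / (‖α - 1‖ * imSign z)) * imSign z = -(N / ‖α - 1‖) by
    field_simp; rw [sq, hk], neg_lt_zero]
  positivity

end PhaseLevels

lemma exists_pos_eq_of_tendsto_atTop {g : ℝ → ℝ} (hg : Continuous g) {L v : ℝ}
    (hL : Tendsto g atTop (𝓝 L)) (h0 : g 0 < v) (hv : v < L) : ∃ x, 0 < x ∧ g x = v := by
  obtain ⟨b, hb, hb0⟩ :=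
    ((hL.eventually (eventually_gt_nhds hv)).and (eventually_gt_atTop 0)).exists
  obtain ⟨x, hx, hgx⟩ := intermediate_value_Ioo hb0.le hg.continuousOn ⟨h0, hb⟩
  exact ⟨x, hx.1, hgx⟩

lemma strictMonoOn_of_unique_crossing {g : ℝ → ℝ} (hg : Continuous g) {v x : ℕ → ℝ} {N : ℕ}
    (hv : StrictMono v) (h0 : g 0 < v 0) (hx : ∀ k < N, 0 < x k ∧ g (x k) = v k)
    (huniq : ∀ k < N, ∀ y, 0 < y → g y = v k → y = x k) : StrictMonoOn x (Set.Iio N) := by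
  intro k hk k' hk' hkk'
  by_contra! hle
  have hlow : g 0 < v k := h0.trans_le (hv.monotone (Nat.zero_le k))
  have hhigh : v k < g (x k') := (hx k' hk').2 ▸ hv hkk'
  obtain ⟨y, hy, hgy⟩ := intermediate_value_Ioo (hx k' hk').1.le hg.continuousOn ⟨hlow, hhigh⟩
  linarith [huniq k hk y hy.1 hgy, hy.2]

lemma exists_mem_Ioo_eq_zero_of_mul_neg {f : ℝ → ℝ} (hf : Continuous f) {a b : ℝ} (hab : a < b)
    (h : f a * f b < 0) : ∃ t ∈ Set.Ioo a b, f t = 0 := by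
  rcases mul_neg_iff.1 h with ⟨ha, hb⟩ | ⟨ha, hb⟩
  · exact intermediate_value_Ioo' hab.le hf.continuousOn ⟨hb, ha⟩
  · exact intermediate_value_Ioo hab.le hf.continuousOn ⟨ha, hb⟩

lemma exists_crossings {φ : ℝ → ℝ} (hφ : Continuous φ) {M N : ℕ} {θ : ℝ} (hθ0 : φ 0 < θ)
    (hθπ : θ < π) (hbot : Tendsto φ atBot (𝓝 (M * π))) (htop : Tendsto φ atTop (𝓝 (N * π))) :
    ∃ xL xR : ℕ → ℝ, (∀ k < M, 0 < xL k ∧ φ (-xL k) = θ + k * π) ∧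
      ∀ k < N, 0 < xR k ∧ φ (xR k) = θ + k * π := by
  have hv0 : ∀ k : ℕ, φ 0 < θ + k * π := fun k =>
    hθ0.trans_le (le_add_of_nonneg_right (by positivity))
  have hvlt : ∀ {m k : ℕ}, k < m → θ + k * π < m * π := fun {m k} h => by
    have : (k : ℝ) + 1 ≤ m := by exact_mod_cast h
    nlinarith [Real.pi_pos]
  have hLex : ∀ k < M, ∃ x, 0 < x ∧ φ (-x) = θ + k * π := fun k hk =>
    exists_pos_eq_of_tendsto_atTop (hφ.comp continuous_neg) (hbot.comp tendsto_neg_atTop_atBot)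
      (by simpa using hv0 k) (hvlt hk)
  have hRex : ∀ k < N, ∃ x, 0 < x ∧ φ x = θ + k * π := fun k hk =>
    exists_pos_eq_of_tendsto_atTop hφ htop (hv0 k) (hvlt hk)
  choose! xL hxL using hLex
  choose! xR hxR using hRex
  exact ⟨xL, xR, hxL, hxR⟩

section Merge

variable (M : ℕ) (xL xR : ℕ → ℝ)

/-- The sequence `-xL (M - 1), …, -xL 0, xR 0, xR 1, …`; `mergeIdx M i` is the index in `xL`
or `xR` of its `i`-th term. -/
def mergeSeq (i : ℕ) : ℝ := if i < M then -xL (M - 1 - i) else xR (i - M)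

def mergeIdx (i : ℕ) : ℕ := if i < M then M - 1 - i else i - M

variable {M xL xR} {N : ℕ}

lemma mergeSeq_neg_iff (hL : ∀ k < M, 0 < xL k) (hR : ∀ k < N, 0 < xR k) {i : ℕ}
    (hi : i < M + N) : mergeSeq M xL xR i < 0 ↔ i < M := by
  unfold mergeSeq
  split_ifs with h
  · simpa [h] using hL _ (by omega)
  · simpa [h] using (hR _ (by omega)).le

lemma eq_of_mergeIdx_eq {i j : ℕ} (hij : i < M ↔ j < M)
    (h : mergeIdx M i = mergeIdx M j) : i = j := by
  unfold mergeIdx at h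
  split_ifs at h <;> omega

lemma strictMonoOn_mergeSeq (hL : ∀ k < M, 0 < xL k) (hR : ∀ k < N, 0 < xR k)
    (hLm : StrictMonoOn xL (Set.Iio M)) (hRm : StrictMonoOn xR (Set.Iio N)) :
    StrictMonoOn (mergeSeq M xL xR) (Set.Iio (M + N)) := by
  intro i hi j hj hij
  simp only [Set.mem_Iio] at hi hj
  unfold mergeSeq
  split_ifs with h1 h2 h2
  · exact neg_lt_neg (hLm (by simp; omega) (by simp; omega) (by omega))
  · linarith [hL (M - 1 - i) (by omega), hR (j - M) (by omega)]
  · omega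
  · exact hRm (by simp; omega) (by simp; omega) (by omega)

lemma neg_one_pow_mergeIdx_mul_neg (hL : ∀ k < M, 0 < xL k) (hR : ∀ k < N, 0 < xR k) {i : ℕ}
    (hi : i + 1 < M + N) :
    (-1 : ℝ) ^ (mergeIdx M i + mergeIdx M (i + 1))
      * (mergeSeq M xL xR i * mergeSeq M xL xR (i + 1)) < 0 := by
  unfold mergeIdx mergeSeq
  split_ifs with h1 h2 h2
  · rw [Odd.neg_one_pow ⟨M - 1 - (i + 1), by omega⟩]
    nlinarith [hL (M - 1 - i) (by omega), hL (M - 1 - (i + 1)) (by omega)]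
  · rw [show M - 1 - i = 0 by omega, show i + 1 - M = 0 by omega, pow_zero, one_mul]
    nlinarith [hL 0 (by omega), hR 0 (by omega)]
  · omega
  · rw [Odd.neg_one_pow ⟨i - M, by omega⟩]
    nlinarith [hR (i - M) (by omega), hR (i + 1 - M) (by omega)]

end Merge

theorem exists_strictMono_roots_of_crossings {φ : ℝ → ℝ} (hφ : Continuous φ) {M N n : ℕ}
    (hn : M + N = n) {θ : ℝ} (hθ0 : φ 0 < θ) (hθπ : θ < π)
    (hbot : Tendsto φ atBot (𝓝 (M * π))) (htop : Tendsto φ atTop (𝓝 (N * π)))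
    {P : ℝ[X]} (hP : P.Monic) (hdeg : P.natDegree = n)
    (hroot : ∀ x (k : ℕ), φ x = θ + k * π → P.eval x = 0) :
    ∃ (lam : Fin n → ℝ) (K : Fin n → ℕ), StrictMono lam ∧ P = ∏ i, (X - C (lam i)) ∧
      (∀ i, φ (lam i) = θ + K i * π) ∧
      ∀ i : Fin (n - 1), (-1 : ℝ) ^ (K ⟨i, by omega⟩ + K ⟨i + 1, by omega⟩)
        * (lam ⟨i, by omega⟩ * lam ⟨i + 1, by omega⟩) < 0 := by
  subst hn
  obtain ⟨xL, xR, hxL, hxR⟩ := exists_crossings hφ hθ0 hθπ hbot htop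
  set v : ℕ → ℝ := fun k => θ + k * π
  have hv : StrictMono v := fun a b h => by simp only [v]; gcongr
  have hLpos : ∀ k < M, 0 < xL k := fun k hk => (hxL k hk).1
  have hRpos : ∀ k < N, 0 < xR k := fun k hk => (hxR k hk).1
  have hlev : ∀ i < M + N, φ (mergeSeq M xL xR i) = v (mergeIdx M i) := fun i hi => by
    unfold mergeSeq mergeIdx
    split_ifs
    · exact (hxL _ (by omega)).2
    · exact (hxR _ (by omega)).2
  have hinj : Function.Injective fun i : Fin (M + N) => mergeSeq M xL xR i := fun i j h =>
    Fin.ext <| eq_of_mergeIdx_eq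
      (by rw [← mergeSeq_neg_iff hLpos hRpos i.2, ← mergeSeq_neg_iff hLpos hRpos j.2]
          exact iff_of_eq (congrArg (· < 0) h))
      (hv.injective (by rw [← hlev i i.2, ← hlev j j.2]; exact congrArg φ h))
  have hprod := eq_prod_X_sub_C_of_injective hP hdeg hinj fun i => hroot _ _ (hlev i i.2)
  -- `P` has degree `M + N`, so the points found are all its roots: each level is crossed once
  -- on each side.
  have hmem : ∀ y (k : ℕ), φ y = v k →
      ∃ i < M + N, y = mergeSeq M xL xR i ∧ mergeIdx M i = k := fun y k hy => by
    have hPy := hroot y k hy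
    rw [hprod, eval_prod, Finset.prod_eq_zero_iff] at hPy
    obtain ⟨i, -, hi⟩ := hPy
    have hyi : y = mergeSeq M xL xR i := by simpa [sub_eq_zero] using hi
    exact ⟨i, i.2, hyi, hv.injective (by rw [← hlev i i.2, ← hyi, hy])⟩
  have huniqR : ∀ k < N, ∀ y, 0 < y → φ y = v k → y = xR k := fun k _ y hy hφy => by
    obtain ⟨i, hi, rfl, hik⟩ := hmem y k hφy
    have hiM : ¬ i < M := by rw [← mergeSeq_neg_iff hLpos hRpos hi]; exact hy.not_gt
    simp only [mergeSeq, mergeIdx, hiM, if_false] at hik ⊢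
    rw [hik]
  have huniqL : ∀ k < M, ∀ y, 0 < y → φ (-y) = v k → y = xL k := fun k _ y hy hφy => by
    obtain ⟨i, hi, hyi, hik⟩ := hmem (-y) k hφy
    have hiM : i < M := by rw [← mergeSeq_neg_iff hLpos hRpos hi, ← hyi]; linarith
    simp only [mergeSeq, mergeIdx, hiM, if_true] at hyi hik
    rw [← hik, ← neg_neg y, hyi, neg_neg]
  have hmono := strictMonoOn_mergeSeq hLpos hRpos
    (strictMonoOn_of_unique_crossing (hφ.comp continuous_neg) hv (by simpa [v] using hθ0) hxL
      huniqL)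
    (strictMonoOn_of_unique_crossing hφ hv (by simpa [v] using hθ0) hxR huniqR)
  exact ⟨fun i => mergeSeq M xL xR i, fun i => mergeIdx M i, fun i j h => hmono i.2 j.2 h, hprod,
    fun i => hlev i i.2,
    fun i => neg_one_pow_mergeIdx_mul_neg hLpos hRpos (by have := i.2; simp; omega)⟩

lemma strictInterlace_of_alternating {n : ℕ} {lam : Fin n → ℝ} (hlam : StrictMono lam)
    {P Q : ℝ[X]} (hP : P = ∏ i, (X - C (lam i))) (hQ : Q.Monic) (hQdeg : Q.natDegree = n - 1)
    (halt : ∀ i : Fin (n - 1),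
      Q.eval (lam ⟨i, by omega⟩) * Q.eval (lam ⟨i + 1, by omega⟩) < 0) :
    StrictInterlace n P Q := by
  have hroot : ∀ i : Fin (n - 1), ∃ t ∈ Set.Ioo (lam ⟨i, by omega⟩) (lam ⟨i + 1, by omega⟩),
      Q.eval t = 0 := fun i =>
    exists_mem_Ioo_eq_zero_of_mul_neg Q.continuous (hlam (Fin.mk_lt_mk.2 i.1.lt_succ_self))
      (halt i)
  choose mu hmu hQmu using hroot
  have hmu_mono : StrictMono mu := fun i j hij =>
    ((hmu i).2.trans_le (hlam.monotone (Fin.mk_le_mk.2 (Nat.succ_le_of_lt hij)))).trans (hmu j).1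
  exact ⟨lam, mu, hlam, hmu_mono, hP,
    eq_prod_X_sub_C_of_injective hQ hQdeg hmu_mono.injective hQmu, fun i => hmu i⟩

lemma mul_neg_of_signs {s s' x x' a a' e : ℝ} (h : s * s' * (x * x') < 0)
    (ha : s * (x * a) * e < 0) (ha' : s' * (x' * a') * e < 0) : a * a' < 0 := by
  have h1 : 0 < s * s' * (x * x') * (a * a' * (e * e)) := by
    calc (0 : ℝ) < s * (x * a) * e * (s' * (x' * a') * e) := mul_pos_of_neg_of_neg ha ha'
      _ = _ := by ring
  exact neg_of_mul_neg_left (neg_of_mul_pos_right h1 h.le) (mul_self_nonneg e)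

lemma card_filter_im_neg_add_card_filter_im_pos {n : ℕ} {z : Fin n → ℂ}
    (hz : ∀ j, (z j).im ≠ 0) :
    (Finset.univ.filter fun j => (z j).im < 0).card
      + (Finset.univ.filter fun j => 0 < (z j).im).card = n := by
  rw [← Finset.card_union_of_disjoint (Finset.disjoint_filter.2 fun j _ h h' => h.not_gt h'),
    ← Finset.filter_or, Finset.filter_true_of_mem fun j _ => (hz j).lt_or_gt, Finset.card_univ,
    Fintype.card_fin]

theorem exists_monic_strictInterlace_decomposition {n : ℕ} {α : ℂ} (hα : 0 < α.im)
    {z : Fin n → ℂ} (hz : ∀ j, (z j).im ≠ 0) (hsum : ∑ j, arg0pi (z j) = Complex.arg α) :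
    ∃ P Q : ℝ[X], P.Monic ∧ Q.Monic ∧ P.natDegree = n ∧ Q.natDegree = n - 1 ∧
      StrictInterlace n P Q ∧
      ∏ j, (X - C (z j))
        = C α * P.map (algebraMap ℝ ℂ) + C (1 - α) * (X * Q.map (algebraMap ℝ ℂ)) := by
  set H : ℂ[X] := ∏ j, (X - C (z j))
  have hH : H.Monic := monic_prod_of_monic _ _ fun j _ => monic_X_sub_C _
  have hHdeg : H.natDegree = n := by
    simp [H, natDegree_prod_of_monic _ _ fun j _ => monic_X_sub_C (z j)]
  set P := partFst α H
  set S := partSnd α H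
  set Q := S.divX
  obtain ⟨hPm, hPdeg⟩ := monic_partFst hα.ne' hH
  obtain ⟨hSm, hSdeg⟩ := monic_partSnd hα.ne' hH
  obtain ⟨hSX, hQm, hQdeg⟩ : S = X * Q ∧ Q.Monic ∧ Q.natDegree = S.natDegree - 1 :=
    hSm.eq_X_mul_divX_of_coeff_zero (by
      rw [coeff_partSnd, coeff_zero_eq_eval_zero]
      exact coordSnd_eval_zero hα hz hsum)
  obtain ⟨lam, K, hlam, hprod, hlev, hsign⟩ := exists_strictMono_roots_of_crossings
    (continuous_phase hz) (card_filter_im_neg_add_card_filter_im_pos hz)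
    (by rw [phase_zero hz, hsum]; exact arg_lt_arg_sub_one hα)
    (Complex.arg_lt_pi_iff.2 (Or.inr (by simpa using hα.ne'))) (tendsto_phase_atBot hz)
    (tendsto_phase_atTop hz) hPm (hPdeg.trans hHdeg)
    fun x k hx => (eval_parts_of_phase_eq hα hz hx).1
  have hSsign : ∀ i, (-1) ^ K i * (lam i * Q.eval (lam i)) * imSign z < 0 := fun i => by
    have h : (-1) ^ K i * S.eval (lam i) * imSign z < 0 := (eval_parts_of_phase_eq hα hz (hlev i)).2
    rwa [hSX, eval_mul, eval_X] at h
  have hdec : H = C α * P.map (algebraMap ℝ ℂ) + C (1 - α) * S.map (algebraMap ℝ ℂ) :=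
    eq_C_mul_partFst_add_C_mul_partSnd hα.ne' H
  rw [hSX, Polynomial.map_mul, map_X] at hdec
  have hQdeg' : Q.natDegree = n - 1 := by rw [hQdeg, hSdeg, hHdeg]
  exact ⟨P, Q, hPm, hQm, hPdeg.trans hHdeg, hQdeg',
    strictInterlace_of_alternating hlam hprod hQm hQdeg' fun i =>
      mul_neg_of_signs (by rw [← pow_add]; exact hsign i) (hSsign _) (hSsign _), hdec⟩

lemma eq_of_C_mul_add_C_mul_X_mul_eq {α : ℂ} (hα : α.im ≠ 0) {p q P Q : ℝ[X]}
    (h : C α * p.map (algebraMap ℝ ℂ) + C (1 - α) * (X * q.map (algebraMap ℝ ℂ))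
      = C α * P.map (algebraMap ℝ ℂ) + C (1 - α) * (X * Q.map (algebraMap ℝ ℂ))) :
    p = P ∧ q = Q := by
  have hpq := partFst_eq_and_partSnd_eq hα (A := p) (B := X * q)
  have hPQ := partFst_eq_and_partSnd_eq hα (A := P) (B := X * Q)
  simp only [Polynomial.map_mul, map_X] at hpq hPQ
  rw [h] at hpq
  exact ⟨hpq.1.symm.trans hPQ.1, mul_left_cancel₀ X_ne_zero (hpq.2.symm.trans hPQ.2)⟩

/-- Generalized Hermite–Biehler theorem (inverse part, broken interlacing at `t = 0`):
if `Im α > 0` and `z₁, …, zₙ` are non-real with `∑ⱼ Arg_{[0,π)} zⱼ = Arg α`, then for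
`h = ∏ⱼ (z - zⱼ)` there exists a unique pair of monic real polynomials `p`, `q` with
`deg p = n`, `deg q = n - 1` and strictly interlacing zeros such that
`h = α p + (1 - α) z q`. -/
theorem genHB_at_zero_inverse (n : ℕ) (α : ℂ) (hα : 0 < α.im)
    (z : Fin n → ℂ) (hz : ∀ j, (z j).im ≠ 0)
    (hsum : ∑ j, arg0pi (z j) = Complex.arg α) :
    ∃! pq : Polynomial ℝ × Polynomial ℝ,
      pq.1.Monic ∧ pq.2.Monic ∧ pq.1.natDegree = n ∧ pq.2.natDegree = n - 1 ∧
      StrictInterlace n pq.1 pq.2 ∧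
      (∏ j, (Polynomial.X - Polynomial.C (z j)))
        = Polynomial.C α * pq.1.map (algebraMap ℝ ℂ)
          + Polynomial.C (1 - α) * (Polynomial.X * pq.2.map (algebraMap ℝ ℂ)) := by
  obtain ⟨P, Q, hP, hQ, hPdeg, hQdeg, hint, hdec⟩ :=
    exists_monic_strictInterlace_decomposition hα hz hsum
  refine ⟨(P, Q), ⟨hP, hQ, hPdeg, hQdeg, hint, hdec⟩, ?_⟩
  rintro ⟨p, q⟩ ⟨-, -, -, -, -, heq⟩
  obtain ⟨rfl, rfl⟩ := eq_of_C_mul_add_C_mul_X_mul_eq hα.ne' (heq.symm.trans hdec)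
  rfl
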